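/- arXiv:2407.01526 — 3 statements merged into one kernel-verified Lean document; each statement's English description precedes it below -/
import Mathlib

section
/- Suppose λ = iu is purely imaginary (r = 0), the step size α is real (d = 0), and α is chosen as α = α'/u for a real constant α'. Then the characteristic polynomial of R_k simplifies to p(x) = −x³ + x²(2a − iα' + 1) + x(−a² + iaα' − 2a − b²) + a² + b², which does not depend on u. -/
/-!
Expanding the determinant shows that the characteristic polynomial of the block depends on the
step size `α` and the eigenvalue `λ` only through the product `α λ`, and with `α = α' / u`,
`λ = i u` this product is `i α'`.
-/

theorem det_momentum_block_sub_smul_one {R : Type*} [CommRing R] (a b l α x : R) :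
    (!![a, -b, -l; b, a, 0; a * α, -(b * α), 1 - α * l] - x • (1 : Matrix (Fin 3) (Fin 3) R)).det
      = ((a - x) ^ 2 + b ^ 2) * (1 - α * l - x) + α * l * (a ^ 2 + b ^ 2 - a * x) := by
  simp only [Matrix.det_fin_three, Matrix.sub_apply, Matrix.of_apply, Matrix.cons_val',
    Matrix.cons_val_zero, Matrix.cons_val_one, Matrix.cons_val, Matrix.cons_val_fin_one,
    Matrix.smul_apply, Matrix.one_apply_eq, ne_eq, Fin.reduceEq, not_false_eq_true,
    Matrix.one_apply_ne, smul_eq_mul]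
  ring

open Complex in
theorem charpoly_Rk_imaginary_eig_real_step (a b u α' : ℝ) (hu : u > 0) :
    ∀ x : ℂ,
      (!![(a : ℂ), -(b : ℂ), -((u : ℂ) * I);
          (b : ℂ), (a : ℂ), 0;
          ((a * (α' / u) : ℝ) : ℂ), -((b * (α' / u) : ℝ) : ℂ),
            1 - ((α' / u : ℝ) : ℂ) * ((u : ℂ) * I)] - x • (1 : Matrix (Fin 3) (Fin 3) ℂ)).det
      = -x ^ 3 + x ^ 2 * (2 * a - I * α' + 1)
        + x * (-(a : ℂ) ^ 2 + I * a * α' - 2 * a - (b : ℂ) ^ 2)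
        + (a : ℂ) ^ 2 + (b : ℂ) ^ 2 := by
  intro x
  have step_mul_eig : ((α' / u : ℝ) : ℂ) * ((u : ℂ) * I) = I * α' := by
    have hu' : (u : ℂ) ≠ 0 := by exact_mod_cast hu.ne'
    push_cast
    field_simp
  rw [ofReal_mul, ofReal_mul, det_momentum_block_sub_smul_one, step_mul_eig]
  ring
end

section
/- Let β = 0.986·exp(i(π − π/16)) and α' = 0.75. Every root of the cubic p(x) = x(Re(β)(iα' − 2) − |β|²) + x²(2Re(β) − iα' + 1) + |β|² − x³ has modulus strictly less than 1. -/
/-!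
Compare the cubic with `(x - z₁)(x - z₂)(x - z₃)` for explicit approximate roots `zᵢ` inside the
unit disk: for `‖x‖ = t ≥ 1` the product has modulus at least `∏ (t - ‖zᵢ‖)`, which beats the
tiny coefficient error `ε (t² + t + 1)`, so no root lies outside the disk. The only transcendental
input is `Re β = -0.986 cos (π / 16)`, pinned down by `cos (π / 16) = √(2 + √(2 + √2)) / 2`.
-/

open Complex Set Real

theorem re_ofReal_mul_exp_I_mul (r θ : ℝ) : ((r : ℂ) * exp (I * θ)).re = r * Real.cos θ := by
  rw [re_ofReal_mul, mul_comm I, exp_ofReal_mul_I_re]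

theorem norm_ofReal_mul_exp_I_mul {r : ℝ} (hr : 0 ≤ r) (θ : ℝ) :
    ‖(r : ℂ) * exp (I * θ)‖ = r := by
  rw [norm_mul, norm_exp_I_mul_ofReal, mul_one, norm_real, Real.norm_of_nonneg hr]

theorem cos_pi_div_sixteen_mem_Ioo :
    Real.cos (π / 16) ∈ Ioo 0.980785280403 0.9807852804035 := by
  have h₁ : √2 ∈ Ioo 1.414213562373 1.414213562374 :=
    ⟨(Real.lt_sqrt (by norm_num)).2 (by norm_num), (Real.sqrt_lt' (by norm_num)).2 (by norm_num)⟩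
  have h₂ : √(2 + √2) ∈ Ioo 1.847759065022 1.847759065023 :=
    ⟨(Real.lt_sqrt (by norm_num)).2 (by norm_num; linarith [h₁.1]),
      (Real.sqrt_lt' (by norm_num)).2 (by norm_num; linarith [h₁.2])⟩
  have h₃ : √(2 + √(2 + √2)) ∈ Ioo 1.961570560806 1.961570560807 :=
    ⟨(Real.lt_sqrt (by norm_num)).2 (by norm_num; linarith [h₂.1]),
      (Real.sqrt_lt' (by norm_num)).2 (by norm_num; linarith [h₂.2])⟩
  rw [Real.cos_pi_div_sixteen]
  constructor <;> linarith [h₃.1, h₃.2]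

theorem norm_lt_one_of_cubic_root_of_near_vieta {x z₁ z₂ z₃ a₂ a₁ a₀ : ℂ} {r₁ r₂ r₃ ε : ℝ}
    (hx : x ^ 3 = a₂ * x ^ 2 + a₁ * x + a₀)
    (h₂ : ‖a₂ - (z₁ + z₂ + z₃)‖ ≤ ε) (h₁ : ‖a₁ + (z₁ * z₂ + z₁ * z₃ + z₂ * z₃)‖ ≤ ε)
    (h₀ : ‖a₀ - z₁ * z₂ * z₃‖ ≤ ε)
    (hz₁ : ‖z₁‖ ≤ r₁) (hz₂ : ‖z₂‖ ≤ r₂) (hz₃ : ‖z₃‖ ≤ r₃) (hr₂ : r₂ ≤ 1) (hr₃ : r₃ ≤ 1)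
    (hmargin : ∀ t : ℝ, 1 ≤ t → ε * (t ^ 2 + t + 1) < (t - r₁) * (t - r₂) * (t - r₃)) :
    ‖x‖ < 1 := by
  by_contra! ht
  have hfactor : (x - z₁) * (x - z₂) * (x - z₃) = (a₂ - (z₁ + z₂ + z₃)) * x ^ 2
      + (a₁ + (z₁ * z₂ + z₁ * z₃ + z₂ * z₃)) * x + (a₀ - z₁ * z₂ * z₃) := by
    linear_combination hx
  have hdist {z : ℂ} {r : ℝ} (hz : ‖z‖ ≤ r) : ‖x‖ - r ≤ ‖x - z‖ :=
    (sub_le_sub_left hz _).trans (norm_sub_norm_le x z)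
  have hlower : (‖x‖ - r₁) * (‖x‖ - r₂) * (‖x‖ - r₃) ≤ ‖(x - z₁) * (x - z₂) * (x - z₃)‖ := by
    rw [norm_mul, norm_mul]
    exact mul_le_mul (mul_le_mul (hdist hz₁) (hdist hz₂) (by linarith) (norm_nonneg _))
      (hdist hz₃) (by linarith) (by positivity)
  have hupper : ‖(x - z₁) * (x - z₂) * (x - z₃)‖ ≤ ε * (‖x‖ ^ 2 + ‖x‖ + 1) := by
    rw [hfactor]
    calc _ ≤ ‖(a₂ - (z₁ + z₂ + z₃)) * x ^ 2‖ + ‖(a₁ + (z₁ * z₂ + z₁ * z₃ + z₂ * z₃)) * x‖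
          + ‖a₀ - z₁ * z₂ * z₃‖ := norm_add₃_le
      _ ≤ ε * ‖x‖ ^ 2 + ε * ‖x‖ + ε := by
          rw [norm_mul, norm_mul, norm_pow]
          gcongr
      _ = ε * (‖x‖ ^ 2 + ‖x‖ + 1) := by ring
  exact (hmargin _ ht).not_ge (hlower.trans hupper)

/-- The `zᵢ` are the roots rounded to ten decimals, with `Im z₂` adjusted so that
`Im (z₁ + z₂ + z₃) = -3/4` exactly. Two roots lie within `6 · 10⁻⁴` of the unit circle, which is
what forces this precision. -/
theorem norm_lt_one_of_momentum_cubic_eq_zero {c : ℝ}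
    (hc : c ∈ Ioo (-0.96705428647786) (-0.96705428647735)) {x : ℂ}
    (hx : x * (c * (I * 0.75 - 2) - 0.986 ^ 2) + x ^ 2 * (2 * c - I * 0.75 + 1) + 0.986 ^ 2
      - x ^ 3 = 0) : ‖x‖ < 1 := by
  have hsmall {e : ℂ} (hre : |e.re| ≤ 1.5e-10) (him : |e.im| ≤ 1.5e-10) : ‖e‖ ≤ 3e-10 := by
    linarith [norm_le_abs_re_add_abs_im e]
  have hmargin (t : ℝ) (ht : 1 ≤ t) :
      3e-10 * (t ^ 2 + t + 1) < (t - 0.9997991) * (t - 0.9729266) * (t - 0.9994499) := by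
    -- as a cubic in `s = t - 1` all coefficients are positive
    obtain ⟨s, hs, rfl⟩ : ∃ s, 0 ≤ s ∧ t = 1 + s := ⟨t - 1, by linarith, by ring⟩
    nlinarith [pow_nonneg hs 2, pow_nonneg hs 3]
  refine norm_lt_one_of_cubic_root_of_near_vieta (z₁ := 0.9256965912 - 0.3777354242 * I)
    (z₂ := -0.9694778168 + 0.0818469293 * I) (z₃ := -0.8903273474 - 0.4541115051 * I)
    (a₂ := 2 * c - I * 0.75 + 1) (a₁ := c * (I * 0.75 - 2) - 0.986 ^ 2) (a₀ := 0.986 ^ 2)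
    (by linear_combination -hx) ?_ ?_ ?_ ?_ ?_ ?_ (by norm_num) (by norm_num) hmargin
  iterate 3
    exact hsmall (by norm_num [abs_le] <;> constructor <;> linarith [hc.1, hc.2])
      (by norm_num [abs_le] <;> constructor <;> linarith [hc.1, hc.2])
  all_goals rw [norm_def, Real.sqrt_le_left (by norm_num)]; norm_num [normSq_apply]

open Complex in
theorem roots_in_unit_disk_neg_phase :
    ∀ x : ℂ,
      (let β : ℂ := (0.986 : ℂ) * Complex.exp (I * ((Real.pi - Real.pi / 16 : ℝ) : ℂ));
       let α' : ℂ := (0.75 : ℂ);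
       x * ((β.re : ℂ) * (I * α' - 2) - (‖β‖ : ℂ) ^ 2)
         + x ^ 2 * (2 * β.re - I * α' + 1) + (‖β‖ : ℂ) ^ 2 - x ^ 3) = 0 →
      ‖x‖ < 1 := by
  intro x hx
  have hβ : (0.986 : ℂ) = ((0.986 : ℝ) : ℂ) := by norm_num
  simp only [hβ, re_ofReal_mul_exp_I_mul,
    norm_ofReal_mul_exp_I_mul (by norm_num : (0 : ℝ) ≤ 0.986)] at hx
  rw [← hβ] at hx
  refine norm_lt_one_of_momentum_cubic_eq_zero ?_ hx
  obtain ⟨hlo, hhi⟩ := cos_pi_div_sixteen_mem_Ioo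
  rw [Real.cos_pi_sub]
  constructor <;> linarith
end

section
/- Consider simultaneous gradient descent with classical real momentum β ∈ [0,1) and real step size α > 0 on the bilinear game with joint-gradient Jacobian eigenvalue λ = iu, u ≠ 0. Then the spectral radius of the 2×2 per-eigenspace update matrix [[β, −λ], [αβ, 1 − αλ]] is at least 1; hence simultaneous gradient descent with nonnegative real momentum does not converge on purely adversarial bilinear games. -/
/-!
The characteristic polynomial of the update matrix is `μ² - (1 + β - iαu) μ + β`, so its two
roots `μ₁, μ₂` satisfy `μ₁ μ₂ = β` and `Re (μ₁ + μ₂) = 1 + β`. If both were inside the open unit disc,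
then `(1 - |μ₁|)(1 - |μ₂|) > 0` would give `Re μ₁ + Re μ₂ ≤ |μ₁| + |μ₂| < 1 + |μ₁ μ₂| = 1 + β`.
-/

open Complex Polynomial

theorem IsAlgClosed.exists_add_eq_and_mul_eq {K : Type*} [Field K] [IsAlgClosed K] (s p : K) :
    ∃ z w : K, z + w = s ∧ z * w = p := by
  have hdeg : (X ^ 2 - C s * X + C p : K[X]).degree = 2 := by compute_degree!
  obtain ⟨z, hz⟩ := IsAlgClosed.exists_root _ (hdeg ▸ two_ne_zero)
  refine ⟨z, s - z, by ring, ?_⟩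
  simp only [IsRoot, eval_add, eval_sub, eval_mul, eval_pow, eval_X, eval_C] at hz
  linear_combination -hz

theorem Matrix.det_sub_smul_one_fin_two {R : Type*} [CommRing R]
    (A : Matrix (Fin 2) (Fin 2) R) (μ : R) :
    (A - μ • 1).det = μ ^ 2 - A.trace * μ + A.det := by
  simp only [Matrix.det_fin_two, Matrix.trace_fin_two, Matrix.sub_apply, Matrix.smul_apply,
    Matrix.one_apply_eq, Matrix.one_apply_ne, ne_eq, zero_ne_one, one_ne_zero, not_false_eq_true,
    smul_eq_mul]
  ring

theorem Complex.one_le_norm_or_one_le_norm_of_add_re {z w : ℂ} (h : 1 + ‖z * w‖ ≤ (z + w).re) :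
    1 ≤ ‖z‖ ∨ 1 ≤ ‖w‖ := by
  by_contra! hlt
  rw [norm_mul, add_re] at h
  nlinarith [re_le_norm z, re_le_norm w]

open Complex in
theorem real_momentum_fails_bilinear_general (β α u : ℝ) (hβ : 0 ≤ β) :
    ∃ μ : ℂ,
      (!![(β : ℂ), -((u : ℂ) * I);
          ((α * β : ℝ) : ℂ), 1 - (α : ℂ) * ((u : ℂ) * I)]
        - μ • (1 : Matrix (Fin 2) (Fin 2) ℂ)).det = 0 ∧ 1 ≤ ‖μ‖ := by
  set A : Matrix (Fin 2) (Fin 2) ℂ :=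
    !![(β : ℂ), -((u : ℂ) * I); ((α * β : ℝ) : ℂ), 1 - (α : ℂ) * ((u : ℂ) * I)]
  have htrace : A.trace = 1 + β - α * u * I := by
    rw [Matrix.trace_fin_two_of]
    ring
  have hdet : A.det = β := by
    rw [Matrix.det_fin_two_of]
    push_cast
    ring
  obtain ⟨z, w, hsum, hprod⟩ := IsAlgClosed.exists_add_eq_and_mul_eq A.trace A.det
  have hchar (μ : ℂ) : (A - μ • 1).det = (μ - z) * (μ - w) := by
    rw [Matrix.det_sub_smul_one_fin_two, ← hsum, ← hprod]
    ring
  have hre : 1 + ‖z * w‖ ≤ (z + w).re := by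
    rw [hsum, hprod, htrace, hdet, norm_real, Real.norm_of_nonneg hβ]
    simp
  rcases one_le_norm_or_one_le_norm_of_add_re hre with hz | hw
  · exact ⟨z, by simp [hchar], hz⟩
  · exact ⟨w, by simp [hchar], hw⟩

open Complex in
theorem real_momentum_fails_bilinear (β α u : ℝ) (hβ : 0 ≤ β) (hβ1 : β < 1)
    (hα : 0 < α) (hu : u ≠ 0) :
    ∃ μ : ℂ,
      (!![(β : ℂ), -((u : ℂ) * I);
          ((α * β : ℝ) : ℂ), 1 - (α : ℂ) * ((u : ℂ) * I)]
        - μ • (1 : Matrix (Fin 2) (Fin 2) ℂ)).det = 0 ∧ 1 ≤ ‖μ‖ :=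
  real_momentum_fails_bilinear_general β α u hβ
end
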